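/- arXiv:1505.06499 — 4 statements merged into one kernel-verified Lean document; each statement's English description precedes it below -/
import Mathlib

section
/- Let n ≥ 1, δ > 0, α ∈ (0,1], M > 5 and 0 < ε < 1/2. Set Y := δ e_{n+1} ∈ ℝ^{n+1} and B_Y := the closed ball centered at Y of radius (1−ε^{2M/α})δ. Let c ∈ (0,1) and C₁ ≥ 1, let v ∈ ℝ^{n+1} be a vector with c ≤ |v| ≤ c^{-1}, and let u : B_Y → [0,∞) be a nonnegative function satisfying |u(W) − v·W| ≤ C₁ ε^{2M−5} δ for all W ∈ B_Y. Then 0 ≤ |v| − v·e_{n+1} ≤ C ε^{2M−5} and | |v| e_{n+1} − v | ≤ C ε^{M−3}, where C depends only on c and C₁. -/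
/-! Evaluating the approximation at the point of the ball where `v·W` is smallest,
`W = δe - (1 - ε^{2M/α})δ v/|v|`, and using `u(W) ≥ 0` gives
`(1 - ε^{2M/α})|v| ≤ v·e + C₁ε^{2M-5}`, i.e. `|v| - v·e = O(ε^{2M-5})`.
The second bound is the square root of the first, because
`||v|e - v|² = 2|v|(|v| - v·e)` for a unit vector `e`. -/

open MeasureTheory Metric Set
open scoped ENNReal NNReal InnerProductSpace

noncomputable section

abbrev ES (n : ℕ) : Type := EuclideanSpace ℝ (Fin (n + 1))

/-- The "upward" unit vector `e_{n+1}` of `ℝ^{n+1}`. -/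
def eLast (n : ℕ) : ES n := EuclideanSpace.single (Fin.last n) (1 : ℝ)

lemma norm_eLast (n : ℕ) : ‖eLast n‖ = 1 := by
  simp [eLast]

section InnerProductSpace

variable {E : Type*} [NormedAddCommGroup E] [InnerProductSpace ℝ E]

/-- The linear functional `⟪v, ·⟫` attains `⟪v, x⟫ - r‖v‖` on `closedBall x r`, at
`x - (r / ‖v‖) • v`. -/
lemma mul_norm_le_inner_add_of_forall_mem_closedBall {v x : E} {r η : ℝ} (hr : 0 ≤ r)
    (h : ∀ W ∈ closedBall x r, -η ≤ ⟪v, W⟫_ℝ) : r * ‖v‖ ≤ ⟪v, x⟫_ℝ + η := by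
  have hmem : x - (r * ‖v‖⁻¹) • v ∈ closedBall x r := by
    rw [mem_closedBall, dist_eq_norm, sub_sub_cancel_left, norm_neg, norm_smul,
      Real.norm_of_nonneg (by positivity), mul_assoc]
    exact mul_le_of_le_one_right hr (inv_mul_le_one_of_le₀ le_rfl (norm_nonneg v))
  have hinner : ⟪v, x - (r * ‖v‖⁻¹) • v⟫_ℝ = ⟪v, x⟫_ℝ - r * ‖v‖ := by
    rw [inner_sub_right, real_inner_smul_right, real_inner_self_eq_norm_sq]
    rcases eq_or_ne ‖v‖ 0 with hv | hv
    · simp [hv]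
    · field_simp
  linarith [h _ hmem]

lemma norm_sub_inner_le_of_nonneg_of_abs_sub_inner_le {e v : E} {u : E → ℝ} {δ ρ η : ℝ}
    (hδ : 0 < δ) (hρ : ρ ≤ 1)
    (hu : ∀ W ∈ closedBall (δ • e) ((1 - ρ) * δ), 0 ≤ u W ∧ |u W - ⟪v, W⟫_ℝ| ≤ η * δ) :
    ‖v‖ - ⟪v, e⟫_ℝ ≤ ρ * ‖v‖ + η := by
  have hbound := mul_norm_le_inner_add_of_forall_mem_closedBall (v := v) (η := η * δ)
    (mul_nonneg (sub_nonneg.2 hρ) hδ.le) fun W hW => by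
      obtain ⟨hu0, hud⟩ := hu W hW
      linarith [(abs_le.1 hud).2]
  rw [real_inner_smul_right] at hbound
  nlinarith

lemma norm_sub_inner_nonneg_of_norm_eq_one {e : E} (he : ‖e‖ = 1) (v : E) :
    0 ≤ ‖v‖ - ⟪v, e⟫_ℝ := by
  have := real_inner_le_norm v e
  rw [he, mul_one] at this
  linarith

lemma norm_norm_smul_sub_sq_of_norm_eq_one {e : E} (he : ‖e‖ = 1) (v : E) :
    ‖‖v‖ • e - v‖ ^ 2 = 2 * ‖v‖ * (‖v‖ - ⟪v, e⟫_ℝ) := by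
  rw [norm_sub_sq_real, norm_smul, real_inner_smul_left, norm_norm, he, mul_one,
    real_inner_comm e v]
  ring

end InnerProductSpace

theorem gradient_points_up_general (n : ℕ) (c C₁ : ℝ) (hc : 0 < c)
    (hC₁ : 1 ≤ C₁) :
    ∃ C : ℝ, 0 < C ∧
      ∀ δ α M ε : ℝ, 0 < δ → 0 < α → α ≤ 1 → 5 < M → 0 < ε → ε < 1 / 2 →
      ∀ v : ES n, c ≤ ‖v‖ → ‖v‖ ≤ c⁻¹ →
      ∀ u : ES n → ℝ,
        (∀ W ∈ closedBall (δ • eLast n) ((1 - ε ^ (2 * M / α)) * δ),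
          0 ≤ u W ∧ |u W - ⟪v, W⟫_ℝ| ≤ C₁ * ε ^ (2 * M - 5) * δ) →
        (0 ≤ ‖v‖ - ⟪v, eLast n⟫_ℝ ∧ ‖v‖ - ⟪v, eLast n⟫_ℝ ≤ C * ε ^ (2 * M - 5)) ∧
          ‖‖v‖ • eLast n - v‖ ≤ C * ε ^ (M - 3) := by
  set C₀ := C₁ + c⁻¹
  set C₂ := √(2 * c⁻¹ * C₀)
  refine ⟨C₀ + C₂, by positivity, fun δ α M ε hδ hα hα1 hM hε hε2 v hvc hvc' u hu => ?_⟩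
  have hε1 : ε ≤ 1 := by linarith
  have hρ : ε ^ (2 * M / α) ≤ ε ^ (2 * M - 5) :=
    Real.rpow_le_rpow_of_exponent_ge hε hε1 (by rw [le_div_iff₀ hα]; nlinarith)
  have hgap : ‖v‖ - ⟪v, eLast n⟫_ℝ ≤ C₀ * ε ^ (2 * M - 5) := by
    have := norm_sub_inner_le_of_nonneg_of_abs_sub_inner_le (η := C₁ * ε ^ (2 * M - 5)) hδ
      (Real.rpow_le_one hε.le hε1 (by positivity)) hu
    nlinarith [mul_le_mul hρ hvc' (norm_nonneg v) (by positivity)]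
  have hgap_nonneg := norm_sub_inner_nonneg_of_norm_eq_one (norm_eLast n) v
  have hsq : ‖‖v‖ • eLast n - v‖ ^ 2 ≤ (C₂ * ε ^ (M - 3)) ^ 2 := by
    have hexp : ε ^ (2 * M - 5) ≤ (ε ^ (M - 3)) ^ 2 := by
      rw [← Real.rpow_two, ← Real.rpow_mul hε.le]
      exact Real.rpow_le_rpow_of_exponent_ge hε hε1 (by linarith)
    rw [norm_norm_smul_sub_sq_of_norm_eq_one (norm_eLast n), mul_pow,
      Real.sq_sqrt (by positivity)]
    calc 2 * ‖v‖ * (‖v‖ - ⟪v, eLast n⟫_ℝ) ≤ 2 * c⁻¹ * (C₀ * ε ^ (2 * M - 5)) := by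
          gcongr
      _ ≤ 2 * c⁻¹ * C₀ * (ε ^ (M - 3)) ^ 2 := by
          rw [← mul_assoc]; gcongr
  refine ⟨⟨hgap_nonneg, hgap.trans ?_⟩, ?_⟩
  · gcongr; exact le_add_of_nonneg_right (Real.sqrt_nonneg _)
  · calc ‖‖v‖ • eLast n - v‖ ≤ C₂ * ε ^ (M - 3) := pow_le_pow_iff_left₀ (norm_nonneg _)
          (by positivity) two_ne_zero |>.1 hsq
      _ ≤ (C₀ + C₂) * ε ^ (M - 3) := by
          gcongr; exact le_add_of_nonneg_left (by positivity)

/-- Claims 6.19 and 6.24. If a nonnegative function `u` on the ball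
`B_Y = B(δe_{n+1}, (1-ε^{2M/α})δ)` is within `C₁ ε^{2M-5} δ` of the linear function
`W ↦ v·W`, with `c ≤ |v| ≤ c⁻¹`, then `0 ≤ |v| - v·e_{n+1} ≤ C ε^{2M-5}` and
`||v|e_{n+1} - v| ≤ C ε^{M-3}`, where `C` depends only on `c` and `C₁`. -/
theorem gradient_points_up (n : ℕ) (hn : 1 ≤ n) (c C₁ : ℝ) (hc : 0 < c) (hc1 : c < 1)
    (hC₁ : 1 ≤ C₁) :
    ∃ C : ℝ, 0 < C ∧
      ∀ δ α M ε : ℝ, 0 < δ → 0 < α → α ≤ 1 → 5 < M → 0 < ε → ε < 1 / 2 →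
      ∀ v : ES n, c ≤ ‖v‖ → ‖v‖ ≤ c⁻¹ →
      ∀ u : ES n → ℝ,
        (∀ W ∈ closedBall (δ • eLast n) ((1 - ε ^ (2 * M / α)) * δ),
          0 ≤ u W ∧ |u W - ⟪v, W⟫_ℝ| ≤ C₁ * ε ^ (2 * M - 5) * δ) →
        (0 ≤ ‖v‖ - ⟪v, eLast n⟫_ℝ ∧ ‖v‖ - ⟪v, eLast n⟫_ℝ ≤ C * ε ^ (2 * M - 5)) ∧
          ‖‖v‖ • eLast n - v‖ ≤ C * ε ^ (M - 3) :=
  gradient_points_up_general n c C₁ hc hC₁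
end
end

section
/- Let n ≥ 1, ℓ > 0, 0 < ε < 1/2, M > 7, and let κ, C₁, C₂ be positive constants with κ ≤ C₁. Let N be a positive integer with N ≤ C₁ ε^{-4}, and let Y₀, Y₁, …, Y_N ∈ ℝ^{n+1}. For each 0 ≤ k ≤ N let B_k be a closed ball centered at Y_k of radius ρ_k with 0 < ρ_k ≤ C₁ ε^{-3} ℓ, and suppose that Y_{k+1} ∈ B_k and |Y_{k+1} − Y_k| ≤ ℓ for 0 ≤ k ≤ N−1. Let u be continuously differentiable on an open set containing ∪_{k=0}^N B_k, and assume |∇u(W) − κ e_{n+1}| ≤ C₂ ε^{M−3} for all W ∈ ∪_{k=0}^N B_k, and |u(W) − κ W_{n+1}| ≤ C₂ ε^{M−3} ℓ for all W ∈ B₀. Then |u(Y_k) − κ (Y_k)_{n+1}| ≤ C k ε^{M−3} ℓ for every 1 ≤ k ≤ N, and |u(W) − κ W_{n+1}| ≤ C ε^{M−7} ℓ for every W ∈ B_N, where C depends only on C₁ and C₂. -/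
open MeasureTheory Metric Set
open scoped ENNReal NNReal InnerProductSpace

noncomputable section

/-!
The error `u W - κ W_{n+1} = u W - ⟪κ e_{n+1}, W⟫` has gradient of size at most
`δ = C₂ ε^{M-3}` on every ball, so by the mean value inequality it changes by at most `δ ℓ` from
one center to the next and by at most `δ ρ_N` inside the last ball. Summing along the chain gives
`(k + 1) δ ℓ` at `Y_k`, and `N ≤ C₁ ε⁻⁴`, `ρ_N ≤ C₁ ε⁻³ ℓ` turn the bound on `B_N` into
`3 C₁ C₂ ε^{M-7} ℓ`.
-/

theorem norm_le_succ_mul_of_norm_sub_le {G : Type*} [SeminormedAddCommGroup G] {g : ℕ → G}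
    {N : ℕ} {a : ℝ} (h₀ : ‖g 0‖ ≤ a) (hstep : ∀ k < N, ‖g (k + 1) - g k‖ ≤ a) :
    ∀ k ≤ N, ‖g k‖ ≤ (k + 1) * a := by
  intro k hk
  induction k with
  | zero => simpa using h₀
  | succ k ih =>
    calc ‖g (k + 1)‖ ≤ ‖g k‖ + ‖g (k + 1) - g k‖ := norm_le_norm_add_norm_sub' _ _
      _ ≤ (k + 1) * a + a := add_le_add (ih (by omega)) (hstep k (by omega))
      _ = ((k + 1 : ℕ) + 1) * a := by push_cast; ring

theorem norm_fderiv_sub_toDual {F : Type*} [NormedAddCommGroup F] [InnerProductSpace ℝ F]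
    [CompleteSpace F] (u : F → ℝ) (x v : F) :
    ‖fderiv ℝ u x - InnerProductSpace.toDual ℝ F v‖ = ‖gradient u x - v‖ := by
  rw [gradient, ← LinearIsometryEquiv.norm_map (InnerProductSpace.toDual ℝ F), map_sub]
  simp

theorem Convex.abs_sub_inner_sub_le_of_norm_gradient_sub_le {F : Type*} [NormedAddCommGroup F]
    [InnerProductSpace ℝ F] [CompleteSpace F] {u : F → ℝ} {s : Set F} {v x y : F} {δ : ℝ}
    (hs : Convex ℝ s) (hu : ∀ z ∈ s, DifferentiableAt ℝ u z)
    (hgrad : ∀ z ∈ s, ‖gradient u z - v‖ ≤ δ) (hx : x ∈ s) (hy : y ∈ s) :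
    |(u y - ⟪v, y⟫_ℝ) - (u x - ⟪v, x⟫_ℝ)| ≤ δ * dist y x := by
  have key := hs.norm_image_sub_le_of_norm_fderiv_le' (φ := InnerProductSpace.toDual ℝ F v) hu
    (fun z hz => (norm_fderiv_sub_toDual u z v).trans_le (hgrad z hz)) hx hy
  rw [InnerProductSpace.toDual_apply_apply, inner_sub_right, Real.norm_eq_abs] at key
  rw [dist_eq_norm]
  convert key using 2
  ring

theorem inner_smul_eLast (n : ℕ) (κ : ℝ) (W : ES n) :
    ⟪κ • eLast n, W⟫_ℝ = κ * W (Fin.last n) := by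
  simp [eLast, inner_smul_left, EuclideanSpace.inner_single_left]

theorem rpow_mul_inv_pow {ε : ℝ} (hε : 0 < ε) (a : ℝ) (k : ℕ) :
    ε ^ a * ε⁻¹ ^ k = ε ^ (a - k) := by
  rw [Real.rpow_sub_natCast hε.ne', inv_pow, div_eq_mul_inv]

theorem succ_mul_add_le_three_mul_rpow {C₁ C₂ ε M ℓ ρ : ℝ} {N : ℕ} (hC₁ : 0 ≤ C₁) (hC₂ : 0 ≤ C₂)
    (hℓ : 0 ≤ ℓ) (hε : 0 < ε) (hε1 : ε ≤ 1) (hN : 0 < N) (hNle : (N : ℝ) ≤ C₁ * ε⁻¹ ^ 4)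
    (hρ : ρ ≤ C₁ * ε⁻¹ ^ 3 * ℓ) :
    (N + 1) * (C₂ * ε ^ (M - 3) * ℓ) + C₂ * ε ^ (M - 3) * ρ ≤ 3 * C₁ * C₂ * ε ^ (M - 7) * ℓ := by
  have hN1 : (1 : ℝ) ≤ N := by exact_mod_cast hN
  have hε34 : ε⁻¹ ^ 3 ≤ ε⁻¹ ^ 4 := pow_le_pow_right₀ ((one_le_inv₀ hε).mpr hε1) (by norm_num)
  calc _ ≤ 2 * (C₁ * ε⁻¹ ^ 4) * (C₂ * ε ^ (M - 3) * ℓ) + C₂ * ε ^ (M - 3) * (C₁ * ε⁻¹ ^ 4 * ℓ) := by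
        gcongr
        · linarith
        · exact hρ.trans (by gcongr)
    _ = 3 * C₁ * C₂ * (ε ^ (M - 3) * ε⁻¹ ^ 4) * ℓ := by ring
    _ = 3 * C₁ * C₂ * ε ^ (M - 7) * ℓ := by
      rw [rpow_mul_inv_pow hε, show M - 3 - ((4 : ℕ) : ℝ) = M - 7 by push_cast; ring]

section Chain

variable {F : Type*} [NormedAddCommGroup F] [InnerProductSpace ℝ F] [CompleteSpace F]
  {u : F → ℝ} {v : F} {δ ℓ : ℝ} {N : ℕ} {Y : ℕ → F} {ρ : ℕ → ℝ}

theorem abs_sub_inner_le_of_chain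
    (hu : ∀ k ≤ N, ∀ z ∈ closedBall (Y k) (ρ k), DifferentiableAt ℝ u z)
    (hgrad : ∀ k ≤ N, ∀ z ∈ closedBall (Y k) (ρ k), ‖gradient u z - v‖ ≤ δ)
    (hρ : ∀ k ≤ N, 0 ≤ ρ k)
    (hchain : ∀ k < N, Y (k + 1) ∈ closedBall (Y k) (ρ k) ∧ dist (Y (k + 1)) (Y k) ≤ ℓ)
    (h₀ : |u (Y 0) - ⟪v, Y 0⟫_ℝ| ≤ δ * ℓ) :
    ∀ k ≤ N, |u (Y k) - ⟪v, Y k⟫_ℝ| ≤ (k + 1) * (δ * ℓ) := by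
  refine norm_le_succ_mul_of_norm_sub_le (g := fun k => u (Y k) - ⟪v, Y k⟫_ℝ) h₀ fun k hk => ?_
  have hYk := mem_closedBall_self (x := Y k) (hρ k hk.le)
  have hδ : 0 ≤ δ := (norm_nonneg _).trans (hgrad k hk.le _ hYk)
  calc _ ≤ δ * dist (Y (k + 1)) (Y k) :=
        (convex_closedBall _ _).abs_sub_inner_sub_le_of_norm_gradient_sub_le (hu k hk.le)
          (hgrad k hk.le) hYk (hchain k hk).1
    _ ≤ δ * ℓ := by gcongr; exact (hchain k hk).2

theorem abs_sub_inner_le_of_chain_of_mem_closedBall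
    (hu : ∀ k ≤ N, ∀ z ∈ closedBall (Y k) (ρ k), DifferentiableAt ℝ u z)
    (hgrad : ∀ k ≤ N, ∀ z ∈ closedBall (Y k) (ρ k), ‖gradient u z - v‖ ≤ δ)
    (hρ : ∀ k ≤ N, 0 ≤ ρ k)
    (hchain : ∀ k < N, Y (k + 1) ∈ closedBall (Y k) (ρ k) ∧ dist (Y (k + 1)) (Y k) ≤ ℓ)
    (h₀ : |u (Y 0) - ⟪v, Y 0⟫_ℝ| ≤ δ * ℓ) {W : F} (hW : W ∈ closedBall (Y N) (ρ N)) :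
    |u W - ⟪v, W⟫_ℝ| ≤ (N + 1) * (δ * ℓ) + δ * ρ N := by
  have hYN := mem_closedBall_self (x := Y N) (hρ N le_rfl)
  have hδ : 0 ≤ δ := (norm_nonneg _).trans (hgrad N le_rfl _ hYN)
  calc |u W - ⟪v, W⟫_ℝ|
      ≤ |u (Y N) - ⟪v, Y N⟫_ℝ| + |(u W - ⟪v, W⟫_ℝ) - (u (Y N) - ⟪v, Y N⟫_ℝ)| :=
        norm_le_norm_add_norm_sub' (E := ℝ) _ _
    _ ≤ (N + 1) * (δ * ℓ) + δ * dist W (Y N) :=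
        add_le_add (abs_sub_inner_le_of_chain hu hgrad hρ hchain h₀ N le_rfl)
          ((convex_closedBall _ _).abs_sub_inner_sub_le_of_norm_gradient_sub_le (hu N le_rfl)
            (hgrad N le_rfl) hYN hW)
    _ ≤ (N + 1) * (δ * ℓ) + δ * ρ N := by gcongr; exact hW

end Chain

theorem chain_propagation_general (n : ℕ) (C₁ C₂ : ℝ) (hC₁ : 1 ≤ C₁) (hC₂ : 1 ≤ C₂) :
    ∃ C : ℝ, 0 < C ∧
      ∀ ℓ ε M κ : ℝ, 0 < ℓ → 0 < ε → ε < 1 / 2 → 7 < M → 0 < κ → κ ≤ C₁ →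
      ∀ N : ℕ, 0 < N → (N : ℝ) ≤ C₁ * ε⁻¹ ^ 4 →
      ∀ (Y : ℕ → ES n) (ρ : ℕ → ℝ),
        (∀ k ≤ N, 0 < ρ k ∧ ρ k ≤ C₁ * ε⁻¹ ^ 3 * ℓ) →
        (∀ k < N, Y (k + 1) ∈ closedBall (Y k) (ρ k) ∧ dist (Y (k + 1)) (Y k) ≤ ℓ) →
      ∀ (U : Set (ES n)) (u : ES n → ℝ), IsOpen U →
        (⋃ k ∈ Finset.range (N + 1), closedBall (Y k) (ρ k)) ⊆ U →
        ContDiffOn ℝ 1 u U →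
        (∀ W ∈ ⋃ k ∈ Finset.range (N + 1), closedBall (Y k) (ρ k),
          ‖gradient u W - κ • eLast n‖ ≤ C₂ * ε ^ (M - 3)) →
        (∀ W ∈ closedBall (Y 0) (ρ 0),
          |u W - κ * W (Fin.last n)| ≤ C₂ * ε ^ (M - 3) * ℓ) →
        (∀ k : ℕ, 1 ≤ k → k ≤ N →
          |u (Y k) - κ * Y k (Fin.last n)| ≤ C * k * ε ^ (M - 3) * ℓ) ∧
        ∀ W ∈ closedBall (Y N) (ρ N),
          |u W - κ * W (Fin.last n)| ≤ C * ε ^ (M - 7) * ℓ := by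
  refine ⟨3 * C₁ * C₂, by positivity, ?_⟩
  intro ℓ ε M κ hℓ hε hε2 _ _ _ N hN hNle Y ρ hρ hchain U u hU hsub hu hgrad hbase
  have hball : ∀ k ≤ N, closedBall (Y k) (ρ k) ⊆ ⋃ j ∈ Finset.range (N + 1),
      closedBall (Y j) (ρ j) := fun k hk =>
    subset_biUnion_of_mem (u := fun j => closedBall (Y j) (ρ j)) (Finset.mem_range.mpr (by omega))
  have hdiff : ∀ k ≤ N, ∀ z ∈ closedBall (Y k) (ρ k), DifferentiableAt ℝ u z :=
    fun k hk z hz =>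
      (hu.contDiffAt (hU.mem_nhds (hsub (hball k hk hz)))).differentiableAt one_ne_zero
  have hgrad' := fun k hk z hz => hgrad z (hball k hk hz)
  have hρ' := fun k hk => (hρ k hk).1.le
  have hbase' := hbase (Y 0) (mem_closedBall_self (hρ' 0 N.zero_le))
  rw [← inner_smul_eLast] at hbase'
  refine ⟨fun k hk1 hkN => ?_, fun W hW => ?_⟩
  · have hYk := abs_sub_inner_le_of_chain hdiff hgrad' hρ' hchain hbase' k hkN
    rw [inner_smul_eLast] at hYk
    refine hYk.trans ?_
    have hk : (1 : ℝ) ≤ k := by exact_mod_cast hk1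
    calc _ ≤ (3 * C₁) * k * (C₂ * ε ^ (M - 3) * ℓ) := by gcongr; nlinarith
      _ = 3 * C₁ * C₂ * k * ε ^ (M - 3) * ℓ := by ring
  · have hW' := abs_sub_inner_le_of_chain_of_mem_closedBall hdiff hgrad' hρ' hchain hbase' hW
    rw [inner_smul_eLast] at hW'
    exact hW'.trans (succ_mul_add_le_three_mul_rpow (by linarith) (by linarith) hℓ.le hε
      (by linarith) hN hNle (hρ N le_rfl).2)

/-- Claim 6.27: propagation of an affine approximation along a chain of
overlapping balls. If `∇u` is uniformly close to `κ e_{n+1}` on a chain of at most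
`C₁ε⁻⁴` balls of radii at most `C₁ε⁻³ℓ`, whose consecutive centers lie in the previous
ball and at distance at most `ℓ`, and `u` is `C₂ε^{M-3}ℓ`-close to `κ W_{n+1}` on the
first ball, then `|u(Y_k) - κ(Y_k)_{n+1}| ≤ C k ε^{M-3} ℓ` for all `k`, and
`|u(W) - κ W_{n+1}| ≤ C ε^{M-7} ℓ` on the last ball. -/
theorem chain_propagation (n : ℕ) (hn : 1 ≤ n) (C₁ C₂ : ℝ) (hC₁ : 1 ≤ C₁) (hC₂ : 1 ≤ C₂) :
    ∃ C : ℝ, 0 < C ∧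
      ∀ ℓ ε M κ : ℝ, 0 < ℓ → 0 < ε → ε < 1 / 2 → 7 < M → 0 < κ → κ ≤ C₁ →
      ∀ N : ℕ, 0 < N → (N : ℝ) ≤ C₁ * ε⁻¹ ^ 4 →
      ∀ (Y : ℕ → ES n) (ρ : ℕ → ℝ),
        (∀ k ≤ N, 0 < ρ k ∧ ρ k ≤ C₁ * ε⁻¹ ^ 3 * ℓ) →
        (∀ k < N, Y (k + 1) ∈ closedBall (Y k) (ρ k) ∧ dist (Y (k + 1)) (Y k) ≤ ℓ) →
      ∀ (U : Set (ES n)) (u : ES n → ℝ), IsOpen U →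
        (⋃ k ∈ Finset.range (N + 1), closedBall (Y k) (ρ k)) ⊆ U →
        ContDiffOn ℝ 1 u U →
        (∀ W ∈ ⋃ k ∈ Finset.range (N + 1), closedBall (Y k) (ρ k),
          ‖gradient u W - κ • eLast n‖ ≤ C₂ * ε ^ (M - 3)) →
        (∀ W ∈ closedBall (Y 0) (ρ 0),
          |u W - κ * W (Fin.last n)| ≤ C₂ * ε ^ (M - 3) * ℓ) →
        (∀ k : ℕ, 1 ≤ k → k ≤ N →
          |u (Y k) - κ * Y k (Fin.last n)| ≤ C * k * ε ^ (M - 3) * ℓ) ∧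
        ∀ W ∈ closedBall (Y N) (ρ N),
          |u W - κ * W (Fin.last n)| ≤ C * ε ^ (M - 7) * ℓ :=
  chain_propagation_general n C₁ C₂ hC₁ hC₂
end
end

section
/- Let n ≥ 2, ℓ > 0, α ∈ (0,1], M > 7, 0 < ε < 1/2, and let Ω ⊆ ℝ^{n+1} be an open set with boundary E = ∂Ω and δ(X) := dist(X,E). Let x_Q ∈ E, let u : Ω ∩ B(x_Q, ε^{-8}ℓ) → [0,∞) be nonnegative, and let κ ≥ c₁ > 0 and C₁ ≥ 1. Set 𝒪 := B(x_Q, 2ε^{-2}ℓ) ∩ {W ∈ ℝ^{n+1} : W_{n+1} > ε² ℓ}, and for X ∈ Ω set B_X := the closed ball B(X, (1−ε^{2M/α})δ(X)). Assume that every X ∈ 𝒪 belongs to Ω and satisfies |u(W) − κ W_{n+1}| ≤ C₁ ε^{M−7} ℓ for all W ∈ B_X. Then, provided ε is sufficiently small and M is sufficiently large depending only on n, α, c₁ and C₁, every point Z ∈ ℝ^{n+1} with Z_{n+1} = 0 and |Z − x_Q| ≤ ε^{-2} ℓ satisfies dist(Z, E) ≤ 16 ε² ℓ. -/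
/-! Suppose a point `Z` of the hyperplane `{W_{n+1} = 0}` is farther than `16t`, `t = ε²ℓ`, from
`E`. Then `X = Z + 2t e_{n+1}` lies in `𝒪` and `δ(X) > 14t`; since `ε^{2M/α} ≤ 1/2`, the ball `B_X`
contains `W = Z - 5t e_{n+1}`, and `W ∈ Ω` because the ball of radius `δ(X)` around `X` is connected
and misses `∂Ω`. At `W` the nonnegative `u` differs from `κ W_{n+1} = -5κt` by at least
`5c₁ε²ℓ`, which exceeds the allowed error `C₁ε^{M-7}ℓ` as soon as `ε < c₁/C₁` and `M ≥ 10`. -/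

open MeasureTheory Metric Set
open scoped ENNReal NNReal InnerProductSpace

noncomputable section

theorem ball_infDist_frontier_subset {V : Type*} [NormedAddCommGroup V] [NormedSpace ℝ V]
    {s : Set V} (hs : IsOpen s) {x : V} (hx : x ∈ s) :
    ball x (infDist x (frontier s)) ⊆ s := by
  rcases (ball x (infDist x (frontier s))).eq_empty_or_nonempty with hempty | hne
  · simp [hempty]
  refine (convex_ball x _).isPreconnected.subset_of_closure_inter_subset hs
    ⟨x, mem_ball_self (nonempty_ball.mp hne), hx⟩ fun y ⟨hys, hyb⟩ => ?_
  by_contra hy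
  have : y ∈ frontier s := ⟨hys, by rwa [hs.interior_eq]⟩
  exact (mem_ball'.mp hyb).not_ge (infDist_le_dist_of_mem this)

theorem dist_add_smul_add_smul {V : Type*} [NormedAddCommGroup V] [NormedSpace ℝ V]
    (x v : V) (a b : ℝ) : dist (x + a • v) (x + b • v) = |a - b| * ‖v‖ := by
  rw [dist_add_left, dist_eq_norm, ← sub_smul, norm_smul, Real.norm_eq_abs]

theorem two_mul_sq_lt_zpow_neg_two {ε : ℝ} (h0 : 0 < ε) (h : ε ≤ 1 / 2) :
    2 * ε ^ 2 < ε ^ (-2 : ℤ) := by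
  have h4 : ε ^ 4 ≤ 1 / 16 := by nlinarith [pow_le_pow_left₀ h0.le h 4]
  rw [zpow_neg, zpow_ofNat, lt_inv_comm₀ (by positivity) (by positivity)]
  field_simp
  nlinarith

theorem five_mul_sq_add_zpow_neg_two_lt_zpow_neg_eight {ε : ℝ} (h0 : 0 < ε) (h : ε ≤ 1 / 2) :
    5 * ε ^ 2 + ε ^ (-2 : ℤ) < ε ^ (-8 : ℤ) := by
  have h2 : ε ^ 2 ≤ 1 / 4 := by nlinarith
  have h6 : ε ^ 6 ≤ 1 / 64 := by nlinarith [pow_le_pow_left₀ h0.le h 6]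
  simp only [zpow_neg, zpow_ofNat]
  field_simp
  nlinarith [pow_pos h0 4, pow_pos h0 6]

theorem mul_rpow_sub_seven_lt {ε M C c : ℝ} (h0 : 0 < ε) (h1 : ε ≤ 1) (hM : 10 ≤ M)
    (hC : 0 ≤ C) (hεC : C * ε < c) : C * ε ^ (M - 7) < c * ε ^ 2 := by
  have hpow : ε ^ (M - 7) ≤ ε ^ (3 : ℝ) := Real.rpow_le_rpow_of_exponent_ge h0 h1 (by linarith)
  rw [Real.rpow_ofNat] at hpow
  calc C * ε ^ (M - 7) ≤ C * ε * ε ^ 2 := by nlinarith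
    _ < c * ε ^ 2 := by gcongr

def verticalUnit (n : ℕ) : ES n := EuclideanSpace.single (Fin.last n) 1

section Vertical

variable {n : ℕ}

@[simp]
theorem add_smul_verticalUnit_last (Z : ES n) (a : ℝ) :
    (Z + a • verticalUnit n) (Fin.last n) = Z (Fin.last n) + a := by
  simp [verticalUnit]

theorem dist_add_smul_verticalUnit (Z : ES n) (a b : ℝ) :
    dist (Z + a • verticalUnit n) (Z + b • verticalUnit n) = |a - b| := by
  rw [dist_add_smul_add_smul]
  simp [verticalUnit]

theorem dist_add_smul_verticalUnit_self (Z : ES n) (a : ℝ) :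
    dist (Z + a • verticalUnit n) Z = |a| := by
  simpa using dist_add_smul_verticalUnit Z a 0

theorem dist_add_smul_verticalUnit_le (Z Y : ES n) (a : ℝ) :
    dist (Z + a • verticalUnit n) Y ≤ |a| + dist Z Y := by
  simpa only [dist_add_smul_verticalUnit_self] using dist_triangle (Z + a • verticalUnit n) Z Y

/-- `W = Z - 5t e` lies in `Ω` and in the ball around `X = Z + 2t e`; there `u ≥ 0` while
`κ W_{n+1} = -5κt`. -/
theorem five_mul_le_of_abs_sub_le {Ω : Set (ES n)} (hΩ : IsOpen Ω) {Z : ES n}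
    (hZ : Z (Fin.last n) = 0) {t : ℝ} (ht : 0 < t) (hZΩ : 16 * t < infDist Z (frontier Ω))
    (hX : Z + (2 * t) • verticalUnit n ∈ Ω) {u : ES n → ℝ} {κ η c : ℝ} (hc : 1 / 2 ≤ c)
    (happrox : ∀ W ∈ closedBall (Z + (2 * t) • verticalUnit n)
      (c * infDist (Z + (2 * t) • verticalUnit n) (frontier Ω)),
      |u W - κ * W (Fin.last n)| ≤ η)
    (hu : Z + (-(5 * t)) • verticalUnit n ∈ Ω → 0 ≤ u (Z + (-(5 * t)) • verticalUnit n)) :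
    5 * κ * t ≤ η := by
  set X := Z + (2 * t) • verticalUnit n
  set W := Z + (-(5 * t)) • verticalUnit n
  have hXZ : dist X Z = 2 * t := by
    rw [dist_add_smul_verticalUnit_self, abs_of_pos (by positivity)]
  have hWX : dist W X = 7 * t := by
    rw [dist_add_smul_verticalUnit, abs_sub_comm, abs_of_pos (by linarith)]; ring
  have hXΩ : 14 * t < infDist X (frontier Ω) := by
    linarith [infDist_le_infDist_add_dist (x := Z) (y := X) (s := frontier Ω), dist_comm X Z]
  have hWΩ : W ∈ Ω := ball_infDist_frontier_subset hΩ hX (by rw [mem_ball, hWX]; linarith)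
  have hWB : W ∈ closedBall X (c * infDist X (frontier Ω)) := by
    rw [mem_closedBall, hWX]; nlinarith
  have hapW := abs_le.mp (happrox W hWB)
  simp only [W, add_smul_verticalUnit_last, hZ] at hapW
  linarith [hu hWΩ]

end Vertical

theorem plane_close_to_boundary_general (n : ℕ) (α c₁ C₁ : ℝ) (hα : 0 < α)
    (hα1 : α ≤ 1) (hc₁ : 0 < c₁) (hC₁ : 1 ≤ C₁) :
    ∃ ε₀ M₀ : ℝ, 0 < ε₀ ∧
      ∀ ε : ℝ, 0 < ε → ε < ε₀ → ∀ M : ℝ, M₀ ≤ M → 7 < M → ∀ ℓ : ℝ, 0 < ℓ →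
      ∀ κ : ℝ, c₁ ≤ κ →
      ∀ Ω : Set (ES n), IsOpen Ω → ∀ E : Set (ES n), E = frontier Ω →
      ∀ xQ ∈ E, ∀ u : ES n → ℝ,
        (∀ z ∈ Ω ∩ ball xQ (ε ^ (-8 : ℤ) * ℓ), 0 ≤ u z) →
        (∀ X ∈ ball xQ (2 * ε ^ (-2 : ℤ) * ℓ) ∩ {W : ES n | ε ^ 2 * ℓ < W (Fin.last n)},
          X ∈ Ω ∧
          ∀ W ∈ closedBall X ((1 - ε ^ (2 * M / α)) * Metric.infDist X E),
            |u W - κ * W (Fin.last n)| ≤ C₁ * ε ^ (M - 7) * ℓ) →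
      ∀ Z : ES n, Z (Fin.last n) = 0 → dist Z xQ ≤ ε ^ (-2 : ℤ) * ℓ →
        Metric.infDist Z E ≤ 16 * ε ^ 2 * ℓ := by
  refine ⟨min (1 / 2) (c₁ / C₁), 10, by positivity, ?_⟩
  intro ε hε hεε₀ M hM _ ℓ hℓ κ hκ Ω hΩ E hE xQ _ u hu happrox Z hZ hZxQ
  subst hE
  have hε_half : ε ≤ 1 / 2 := (hεε₀.trans_le (min_le_left _ _)).le
  have hεC : C₁ * ε < c₁ := by
    rw [← lt_div_iff₀' (by positivity)]; exact hεε₀.trans_le (min_le_right _ _)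
  have hshrink : 1 / 2 ≤ 1 - ε ^ (2 * M / α) := by
    have : 1 ≤ 2 * M / α := by rw [one_le_div hα]; linarith
    linarith [Real.rpow_le_self_of_le_one hε.le (by linarith) this]
  by_contra! hfar
  have ht : 0 < ε ^ 2 * ℓ := by positivity
  have hX := dist_add_smul_verticalUnit_le Z xQ (2 * (ε ^ 2 * ℓ))
  have hW := dist_add_smul_verticalUnit_le Z xQ (-(5 * (ε ^ 2 * ℓ)))
  rw [abs_of_pos (by positivity)] at hX
  rw [abs_neg, abs_of_pos (by positivity)] at hW
  obtain ⟨hXΩ, hXapprox⟩ := happrox (Z + (2 * (ε ^ 2 * ℓ)) • verticalUnit n)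
    ⟨by rw [mem_ball]; nlinarith [two_mul_sq_lt_zpow_neg_two hε hε_half],
      by simp only [mem_ofPred_eq, add_smul_verticalUnit_last, hZ]; linarith⟩
  have hkey := five_mul_le_of_abs_sub_le hΩ hZ ht (by linarith) hXΩ hshrink hXapprox
    fun hWΩ => hu _ ⟨hWΩ, by
      rw [mem_ball]; nlinarith [five_mul_sq_add_zpow_neg_two_lt_zpow_neg_eight hε hε_half]⟩
  have herr := mul_rpow_sub_seven_lt hε (by linarith) hM (by linarith) hεC
  nlinarith

/-- Claim 5.42. If a nonnegative function `u` is within `C₁ε^{M-7}ℓ` of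
the linear function `κ W_{n+1}` on every admissible ball `B_X` centered in the region
`𝒪 = B(x_Q, 2ε⁻²ℓ) ∩ {W_{n+1} > ε²ℓ}`, then the hyperplane `{W_{n+1} = 0}` lies within
distance `16ε²ℓ` of `E = ∂Ω` throughout `B(x_Q, ε⁻²ℓ)`. -/
theorem plane_close_to_boundary (n : ℕ) (hn : 2 ≤ n) (α c₁ C₁ : ℝ) (hα : 0 < α)
    (hα1 : α ≤ 1) (hc₁ : 0 < c₁) (hC₁ : 1 ≤ C₁) :
    ∃ ε₀ M₀ : ℝ, 0 < ε₀ ∧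
      ∀ ε : ℝ, 0 < ε → ε < ε₀ → ∀ M : ℝ, M₀ ≤ M → 7 < M → ∀ ℓ : ℝ, 0 < ℓ →
      ∀ κ : ℝ, c₁ ≤ κ →
      ∀ Ω : Set (ES n), IsOpen Ω → ∀ E : Set (ES n), E = frontier Ω →
      ∀ xQ ∈ E, ∀ u : ES n → ℝ,
        (∀ z ∈ Ω ∩ ball xQ (ε ^ (-8 : ℤ) * ℓ), 0 ≤ u z) →
        (∀ X ∈ ball xQ (2 * ε ^ (-2 : ℤ) * ℓ) ∩ {W : ES n | ε ^ 2 * ℓ < W (Fin.last n)},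
          X ∈ Ω ∧
          ∀ W ∈ closedBall X ((1 - ε ^ (2 * M / α)) * Metric.infDist X E),
            |u W - κ * W (Fin.last n)| ≤ C₁ * ε ^ (M - 7) * ℓ) →
      ∀ Z : ES n, Z (Fin.last n) = 0 → dist Z xQ ≤ ε ^ (-2 : ℤ) * ℓ →
        Metric.infDist Z E ≤ 16 * ε ^ 2 * ℓ :=
  plane_close_to_boundary_general n α c₁ C₁ hα hα1 hc₁ hC₁
end
end

section
/- Let E ⊆ ℝ^{n+1} (n ≥ 2) be an n-dimensional Ahlfors–David regular set with dyadic system 𝔻(E), and suppose E satisfies the WHSA property with parameters K₀ and ε₀ ≪ K₀^{-6}. Then for every 0 < ε < ε₀, the collection ℬ of cubes Q ∈ 𝔻(E) for which the √ε-local BAUP condition fails satisfies the packing condition ∑_{Q⊆Q₀, Q∈ℬ} σ(Q) ≤ C(ε) σ(Q₀) for every Q₀ ∈ 𝔻(E), where C(ε) depends only on n, the ADR and dyadic constants, K₀, ε and the WHSA packing constants. In particular, E satisfies the BAUP condition. -/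
open MeasureTheory Metric Set
open scoped ENNReal NNReal InnerProductSpace

noncomputable section

/-- The surface measure `σ = H^n|_E`. -/
def surfMeasure (n : ℕ) (E : Set (ES n)) : Measure (ES n) :=
  (μH[(n : ℝ)]).restrict E

/-- `E ⊆ ℝ^{n+1}` is `n`-dimensional Ahlfors–David regular with constant `C`. -/
def IsADR (n : ℕ) (C : ℝ) (E : Set (ES n)) : Prop :=
  IsClosed E ∧ 1 ≤ C ∧
    ∀ x ∈ E, ∀ r : ℝ, 0 < r → ENNReal.ofReal r < EMetric.diam E →
      ENNReal.ofReal (C⁻¹ * r ^ n) ≤ μH[(n : ℝ)] (E ∩ ball x r) ∧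
      μH[(n : ℝ)] (E ∩ ball x r) ≤ ENNReal.ofReal (C * r ^ n)

/-- A Christ–David–Semmes dyadic system on `E`. -/
structure DyadicSystem (n : ℕ) (E : Set (ES n)) where
  cubes : ℤ → Set (Set (ES n))
  center : Set (ES n) → ES n
  a₀ : ℝ
  γ : ℝ
  Cstar : ℝ
  a₀_pos : 0 < a₀
  γ_pos : 0 < γ
  Cstar_pos : 0 < Cstar
  borel : ∀ k : ℤ, ∀ Q ∈ cubes k, MeasurableSet Q
  cover : ∀ k : ℤ, ⋃₀ cubes k = E
  nested : ∀ k m : ℤ, k ≤ m → ∀ Q ∈ cubes m, ∀ Q' ∈ cubes k, Q ⊆ Q' ∨ Q ∩ Q' = ∅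
  parent : ∀ k : ℤ, ∀ Q ∈ cubes k, ∀ m : ℤ, m < k → ∃! Q', Q' ∈ cubes m ∧ Q ⊆ Q'
  diam_le : ∀ k : ℤ, ∀ Q ∈ cubes k, EMetric.diam Q ≤ ENNReal.ofReal (Cstar * 2 ^ (-k))
  center_mem : ∀ k : ℤ, ∀ Q ∈ cubes k, center Q ∈ Q
  contains_ball : ∀ k : ℤ, ∀ Q ∈ cubes k, E ∩ ball (center Q) (a₀ * 2 ^ (-k)) ⊆ Q
  small_boundary : ∀ k : ℤ, ∀ Q ∈ cubes k, ∀ ϱ : ℝ, 0 < ϱ → ϱ < a₀ →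
    μH[(n : ℝ)] {x ∈ Q | Metric.infDist x (E \ Q) ≤ ϱ * 2 ^ (-k)} ≤
      ENNReal.ofReal (Cstar * ϱ ^ γ) * μH[(n : ℝ)] Q

/-- Uniform rectifiability: big pieces of Lipschitz images. -/
def IsUR (n : ℕ) (θ M₀ : ℝ) (E : Set (ES n)) : Prop :=
  0 < θ ∧ 0 < M₀ ∧
    ∀ x ∈ E, ∀ r : ℝ, 0 < r → ENNReal.ofReal r < EMetric.diam E →
      ∃ ρ : EuclideanSpace ℝ (Fin n) → ES n,
        LipschitzWith M₀.toNNReal ρ ∧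
        ENNReal.ofReal (θ * r ^ n) ≤ μH[(n : ℝ)] (E ∩ ball x r ∩ ρ '' ball 0 r)

/-- `P` is an affine hyperplane of `ℝ^{n+1}`. -/
def IsHyperplane {n : ℕ} (P : Set (ES n)) : Prop :=
  ∃ (ν : ES n) (c : ℝ), ‖ν‖ = 1 ∧ P = {Z | ⟪ν, Z⟫_ℝ = c}

/-- `H` is an open half-space with boundary hyperplane `P`. -/
def IsHalfSpacePair {n : ℕ} (H P : Set (ES n)) : Prop :=
  ∃ (ν : ES n) (c : ℝ), ‖ν‖ = 1 ∧ H = {Z | c < ⟪ν, Z⟫_ℝ} ∧ P = {Z | ⟪ν, Z⟫_ℝ = c}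

/-- The `ε`-local BAUP condition for a cube `Q` of generation `k`. -/
def LocalBAUP {n : ℕ} (E : Set (ES n)) (D : DyadicSystem n E) (ε : ℝ) (k : ℤ)
    (Q : Set (ES n)) : Prop :=
  ∃ Ps : Set (Set (ES n)), Ps.Nonempty ∧ (∀ P ∈ Ps, IsHyperplane P) ∧
    (∀ y ∈ E ∩ ball (D.center Q) (10 * Metric.diam Q),
      Metric.infDist y (⋃₀ Ps) ≤ ε * 2 ^ (-k)) ∧
    (∀ z ∈ (⋃₀ Ps) ∩ ball (D.center Q) (10 * Metric.diam Q),
      Metric.infDist z E ≤ ε * 2 ^ (-k))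

/-- The `ε`-local WHSA condition with parameter `K₀` for a cube `Q` of generation `k`. -/
def LocalWHSA {n : ℕ} (E : Set (ES n)) (D : DyadicSystem n E) (K₀ ε : ℝ) (k : ℤ)
    (Q : Set (ES n)) : Prop :=
  ∃ Hs P : Set (ES n), IsHalfSpacePair Hs P ∧
    (∀ Z ∈ P ∩ ball (D.center Q) (ε ^ (-2 : ℤ) * 2 ^ (-k)),
      Metric.infDist Z E ≤ ε * 2 ^ (-k)) ∧
    (∃ z ∈ closure Q, Metric.infDist z P ≤ K₀ ^ ((3 : ℝ) / 2) * 2 ^ (-k)) ∧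
    Hs ∩ ball (D.center Q) (ε ^ (-2 : ℤ) * 2 ^ (-k)) ∩ E = ∅

/-- The family of (generations of) cubes `B` satisfies a Carleson packing condition with
constant `C`. -/
def PackedBy {n : ℕ} (E : Set (ES n)) (D : DyadicSystem n E)
    (B : ℤ → Set (ES n) → Prop) (C : ℝ) : Prop :=
  ∀ k₀ : ℤ, ∀ Q₀ ∈ D.cubes k₀,
    ∑' p : {p : ℤ × Set (ES n) // p.2 ∈ D.cubes p.1 ∧ B p.1 p.2 ∧ p.2 ⊆ Q₀},
      μH[(n : ℝ)] p.1.2 ≤ ENNReal.ofReal C * μH[(n : ℝ)] Q₀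

/-- Harmonic: `C²` with vanishing Laplacian. -/
def HarmonicOn {n : ℕ} (u : ES n → ℝ) (U : Set (ES n)) : Prop :=
  ContDiffOn ℝ 2 u U ∧ ∀ x ∈ U,
    ∑ i : Fin (n + 1),
      fderiv ℝ (fun y => fderiv ℝ u y (EuclideanSpace.single i 1)) x
        (EuclideanSpace.single i 1) = 0

/-!
Go `m` generations down from a cube `Q`, with `2ᵐ ≈ K₀^{3/2}/√ε`. If every cube `R` of that
generation near `Q` satisfies the local WHSA condition with a parameter `εc ≤ √ε` small enough
that the windows `B(x_R, εc⁻² ℓ(R))` contain `10Q`, then the boundary hyperplanes of their half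
spaces show that `Q` satisfies the `√ε`-local BAUP condition. So every cube failing BAUP has a
nearby cube `m` generations finer that fails WHSA. Ahlfors regularity makes the measures of such
cubes comparable, lets each witness serve only boundedly many cubes, and puts the witnesses for
the subcubes of `Q₀` into boundedly many cubes of measure comparable to `Q₀`; hence the WHSA
packing passes to BAUP. The second conclusion is the first one applied to `ε²`.
-/

theorem ENNReal.tsum_comp_le_mul_tsum_range {α β : Type*} (f : α → β) (g : β → ℝ≥0∞)
    {M : ℝ≥0∞} (hf : ∀ b, ((f ⁻¹' {b}).encard : ℝ≥0∞) ≤ M) :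
    ∑' a, g (f a) ≤ M * ∑' b : range f, g b := by
  rw [← ENNReal.tsum_fiberwise _ (rangeFactorization f), ← ENNReal.tsum_mul_left]
  refine ENNReal.tsum_le_tsum fun b => ?_
  have hfib : rangeFactorization f ⁻¹' {b} = f ⁻¹' {b.1} := by
    ext a; simp [rangeFactorization, Subtype.ext_iff]
  calc ∑' a : rangeFactorization f ⁻¹' {b}, g (f a)
      = ∑' _ : rangeFactorization f ⁻¹' {b}, g b := tsum_congr fun a => by
        rw [show f a = b.1 from congrArg Subtype.val a.2]
    _ = _ := ENNReal.tsum_set_const _ _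
    _ ≤ M * g b := by rw [hfib]; gcongr; exact hf b

namespace DyadicSystem

variable {n : ℕ} {E : Set (ES n)} (D : DyadicSystem n E) {k : ℤ} {Q : Set (ES n)}

theorem subset_of_mem (hQ : Q ∈ D.cubes k) : Q ⊆ E :=
  D.cover k ▸ subset_sUnion_of_mem hQ

theorem center_mem_set (hQ : Q ∈ D.cubes k) : D.center Q ∈ E :=
  D.subset_of_mem hQ (D.center_mem k Q hQ)

theorem exists_mem_cubes (k : ℤ) {y : ES n} (hy : y ∈ E) : ∃ Q ∈ D.cubes k, y ∈ Q := by
  rwa [← D.cover k, mem_sUnion] at hy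

theorem diam_le_of_mem (hQ : Q ∈ D.cubes k) : Metric.diam Q ≤ D.Cstar * 2 ^ (-k) :=
  ENNReal.toReal_le_of_le_ofReal (mul_pos D.Cstar_pos (by positivity)).le (D.diam_le k Q hQ)

theorem dist_le_of_mem_closure (hQ : Q ∈ D.cubes k) {y z : ES n} (hy : y ∈ closure Q)
    (hz : z ∈ closure Q) : dist y z ≤ D.Cstar * 2 ^ (-k) := by
  have hbdd : Bornology.IsBounded Q :=
    isBounded_iff_ediam_ne_top.2 (ne_top_of_le_ne_top ENNReal.ofReal_ne_top (D.diam_le k Q hQ))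
  refine (dist_le_diam_of_mem hbdd.closure hy hz).trans ?_
  rw [diam_closure]
  exact D.diam_le_of_mem hQ

theorem dist_le_of_mem (hQ : Q ∈ D.cubes k) {y z : ES n} (hy : y ∈ Q) (hz : z ∈ Q) :
    dist y z ≤ D.Cstar * 2 ^ (-k) :=
  D.dist_le_of_mem_closure hQ (subset_closure hy) (subset_closure hz)

/-- Distinct cubes of one generation cannot be nested: a child of the smaller one would have
two parents. -/
theorem eq_or_disjoint {Q' : Set (ES n)} (hQ : Q ∈ D.cubes k) (hQ' : Q' ∈ D.cubes k) :
    Q = Q' ∨ Disjoint Q Q' := by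
  refine (Set.disjoint_or_nonempty_inter Q Q').symm.imp (fun ⟨y, hyQ, hyQ'⟩ => ?_) id
  obtain ⟨R, hR, hyR⟩ := D.exists_mem_cubes (k + 1) (D.subset_of_mem hQ hyQ)
  have hsub : ∀ Q'' ∈ D.cubes k, y ∈ Q'' → R ⊆ Q'' := fun Q'' hQ'' hy =>
    (D.nested k (k + 1) (by omega) R hR Q'' hQ'').resolve_right
      (nonempty_iff_ne_empty.1 ⟨y, hyR, hy⟩)
  exact (D.parent (k + 1) R hR k (by omega)).unique ⟨hQ, hsub Q hQ hyQ⟩ ⟨hQ', hsub Q' hQ' hyQ'⟩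

theorem exists_superset_of_le {j : ℤ} (hQ : Q ∈ D.cubes k) (hjk : j ≤ k) :
    ∃ A ∈ D.cubes j, Q ⊆ A := by
  rcases hjk.eq_or_lt with rfl | hlt
  · exact ⟨Q, hQ, subset_rfl⟩
  · obtain ⟨A, hA, -⟩ := D.parent k Q hQ j hlt
    exact ⟨A, hA⟩

theorem dist_center_le_of_mem {m : ℕ} {R : Set (ES n)} (hQ : Q ∈ D.cubes k)
    (hR : R ∈ D.cubes (k + m)) {y : ES n} (hyR : y ∈ R)
    (hyQ : dist y (D.center Q) ≤ 10 * Metric.diam Q) :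
    dist (D.center Q) (D.center R) ≤ 11 * D.Cstar * 2 ^ (-k) := by
  have h1 := D.dist_le_of_mem hR hyR (D.center_mem _ R hR)
  have h2 : (2 : ℝ) ^ (-(k + m)) ≤ 2 ^ (-k) := zpow_le_zpow_right₀ one_le_two (by omega)
  have := D.Cstar_pos
  nlinarith [D.diam_le_of_mem hQ, dist_triangle (D.center Q) y (D.center R),
    dist_comm y (D.center Q)]

/-- The index set of the sum in `PackedBy`. -/
def subcubes (D : DyadicSystem n E) (B : ℤ → Set (ES n) → Prop) (Q₀ : Set (ES n)) :
    Set (ℤ × Set (ES n)) :=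
  {p | p.2 ∈ D.cubes p.1 ∧ B p.1 p.2 ∧ p.2 ⊆ Q₀}

theorem encard_fiber_le {m : ℕ} {L : ℝ} {M : ℝ≥0∞} (hM : ∀ (k : ℤ), ∀ z ∈ E,
      (Set.encard {Q ∈ D.cubes k | dist (D.center Q) z ≤ L * 2 ^ (-k)} : ℝ≥0∞) ≤ M)
    {S : Set (ℤ × Set (ES n))} (W : ℤ × Set (ES n) → Set (ES n))
    (hW : ∀ p ∈ S, p.2 ∈ D.cubes p.1 ∧ W p ∈ D.cubes (p.1 + m) ∧
      dist (D.center p.2) (D.center (W p)) ≤ L * 2 ^ (-p.1))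
    (q : ℤ × Set (ES n)) :
    (((fun p : S => (p.1.1 + m, W p.1)) ⁻¹' {q}).encard : ℝ≥0∞) ≤ M := by
  set w := fun p : S => (p.1.1 + m, W p.1)
  rcases (w ⁻¹' {q}).eq_empty_or_nonempty with h | ⟨p₀, hp₀⟩
  · simp [h]
  obtain rfl : w p₀ = q := hp₀
  have hgen : ∀ p ∈ w ⁻¹' {w p₀}, p.1.1 = (w p₀).1 - m := fun p hp => by
    rw [← (hp : w p = w p₀)]; simp [w]
  have hinj : InjOn (fun p : S => p.1.2) (w ⁻¹' {w p₀}) := fun p hp p' hp' h =>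
    Subtype.ext (Prod.ext ((hgen p hp).trans (hgen p' hp').symm) h)
  have hsub : (fun p : S => p.1.2) '' (w ⁻¹' {w p₀}) ⊆ {Q ∈ D.cubes ((w p₀).1 - m) |
      dist (D.center Q) (D.center (w p₀).2) ≤ L * 2 ^ (-((w p₀).1 - m))} := by
    rintro _ ⟨p, hp, rfl⟩
    rw [← hgen p hp, ← (hp : w p = w p₀)]
    exact ⟨(hW p p.2).1, (hW p p.2).2.2⟩
  rw [← hinj.encard_image]
  refine le_trans ?_ (hM ((w p₀).1 - m) _ (D.center_mem_set (hW p₀ p₀.2).2.1))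
  exact_mod_cast encard_le_encard hsub

end DyadicSystem

section

variable {n : ℕ} {E : Set (ES n)}

theorem IsHalfSpacePair.isHyperplane {H P : Set (ES n)} (h : IsHalfSpacePair H P) :
    IsHyperplane P :=
  let ⟨ν, c, hν, _, hP⟩ := h
  ⟨ν, c, hν, hP⟩

theorem IsHyperplane.nonempty {P : Set (ES n)} (h : IsHyperplane P) : P.Nonempty := by
  obtain ⟨ν, c, hν, rfl⟩ := h
  refine ⟨c • ν, ?_⟩
  simp [real_inner_smul_right, hν]

/-- The WHSA hyperplanes of the cubes `R` of generation `k + m` near `Q` form a BAUP family for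
`Q`: by `hK₀` every point of `R` is `δ ℓ(Q)`-close to the hyperplane of `R`, and by `hm` the
window `B(x_R, εc⁻² ℓ(R))` contains `B(x_Q, 10 diam Q)`. -/
theorem localBAUP_of_forall_localWHSA (D : DyadicSystem n E) {K₀ εc δ : ℝ} {m : ℕ}
    (hεc : 0 < εc) (hεcδ : εc ≤ δ) (hK₀ : D.Cstar + K₀ ^ ((3 : ℝ) / 2) ≤ δ * 2 ^ m)
    (hm : 21 * D.Cstar * 2 ^ m ≤ εc ^ (-2 : ℤ)) {k : ℤ} {Q : Set (ES n)} (hQ : Q ∈ D.cubes k)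
    (hWHSA : ∀ R ∈ D.cubes (k + m), dist (D.center Q) (D.center R) ≤ 11 * D.Cstar * 2 ^ (-k) →
      LocalWHSA E D K₀ εc (k + m) R) :
    LocalBAUP E D δ k Q := by
  set s : ℝ := 2 ^ (-(k + m : ℤ))
  have hs : 0 < s := by positivity
  have hks : (2 : ℝ) ^ (-k) = 2 ^ m * s := by
    rw [← zpow_natCast (2 : ℝ) m, ← zpow_add₀ two_ne_zero]; ring_nf
  have hdiam : Metric.diam Q ≤ D.Cstar * (2 ^ m * s) := hks ▸ D.diam_le_of_mem hQ
  have hm1 : (1 : ℝ) ≤ 2 ^ m := one_le_pow₀ one_le_two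
  set Ps : Set (Set (ES n)) := {P | ∃ R ∈ D.cubes (k + m),
    dist (D.center Q) (D.center R) ≤ 11 * D.Cstar * 2 ^ (-k) ∧ IsHyperplane P ∧
    (∀ Z ∈ P ∩ ball (D.center R) (εc ^ (-2 : ℤ) * s), infDist Z E ≤ εc * s) ∧
    ∃ z ∈ closure R, infDist z P ≤ K₀ ^ ((3 : ℝ) / 2) * s}
  have hcover : ∀ y ∈ E, dist y (D.center Q) ≤ 10 * Metric.diam Q →
      ∃ P ∈ Ps, infDist y P ≤ δ * 2 ^ (-k) := by
    intro y hy hyQ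
    obtain ⟨R, hR, hyR⟩ := D.exists_mem_cubes (k + m) hy
    have hQR := D.dist_center_le_of_mem hQ hR hyR hyQ
    obtain ⟨H, P, hHP, hPE, ⟨z, hzR, hzP⟩, -⟩ := hWHSA R hR hQR
    refine ⟨P, ⟨R, hR, hQR, hHP.isHyperplane, hPE, z, hzR, hzP⟩, ?_⟩
    calc infDist y P ≤ infDist z P + dist y z := infDist_le_infDist_add_dist
      _ ≤ K₀ ^ ((3 : ℝ) / 2) * s + D.Cstar * s :=
        add_le_add hzP (D.dist_le_of_mem_closure hR (subset_closure hyR) hzR)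
      _ ≤ δ * 2 ^ (-k) := by rw [hks]; nlinarith
  obtain ⟨P₀, hP₀, -⟩ := hcover _ (D.center_mem_set hQ) (by
    simpa using mul_nonneg (by norm_num : (0 : ℝ) ≤ 10) diam_nonneg)
  refine ⟨Ps, ⟨P₀, hP₀⟩, fun P ⟨_, _, _, hP, _⟩ => hP, fun y hy => ?_, ?_⟩
  · obtain ⟨P, hP, hyP⟩ := hcover y hy.1 (mem_ball.1 hy.2).le
    have ⟨_, _, _, hPh, _⟩ := hP
    exact (infDist_le_infDist_of_subset (subset_sUnion_of_mem hP) hPh.nonempty).trans hyP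
  · rintro Z ⟨⟨P, ⟨R, hR, hQR, -, hPE, -⟩, hZP⟩, hZ⟩
    have hZR : dist Z (D.center R) < εc ^ (-2 : ℤ) * s := by
      have := D.Cstar_pos
      calc dist Z (D.center R) ≤ dist Z (D.center Q) + dist (D.center Q) (D.center R) :=
            dist_triangle _ _ _
        _ < 10 * Metric.diam Q + 11 * D.Cstar * 2 ^ (-k) := add_lt_add_of_lt_of_le hZ hQR
        _ ≤ 21 * D.Cstar * 2 ^ m * s := by rw [hks]; nlinarith
        _ ≤ εc ^ (-2 : ℤ) * s := by gcongr
    calc infDist Z E ≤ εc * s := hPE Z ⟨hZP, mem_ball.2 hZR⟩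
      _ ≤ δ * s := by gcongr
      _ ≤ δ * 2 ^ (-k) := by
        rw [hks]; nlinarith [mul_le_mul_of_nonneg_right hm1 (mul_nonneg (hεc.le.trans hεcδ) hs.le)]

end

namespace IsADR

variable {n : ℕ} {C : ℝ} {E : Set (ES n)}

theorem measure_ne_top (hE : IsADR n C E) (h : Metric.ediam E ≠ ⊤) : μH[n] E ≠ ⊤ := by
  set d := (Metric.ediam E).toReal
  rcases (ENNReal.toReal_nonneg : 0 ≤ d).eq_or_lt with hd | hd
  · have hE0 : E.Subsingleton :=
      Metric.ediam_eq_zero_iff.1 (((ENNReal.toReal_eq_zero_iff _).1 hd.symm).resolve_right h)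
    exact ((Measure.hausdorffMeasure_le_one_of_subsingleton hE0 n.cast_nonneg).trans_lt
      ENNReal.one_lt_top).ne
  obtain ⟨t, htE, ht, hcov⟩ := (isCompact_of_isClosed_isBounded hE.1
    (isBounded_iff_ediam_ne_top.2 h)).finite_cover_balls (half_pos hd)
  have hd2 : ENNReal.ofReal (d / 2) < Metric.ediam E :=
    (ENNReal.ofReal_lt_iff_lt_toReal (half_pos hd).le h).2 (half_lt_self hd)
  have hball : ∀ x ∈ t, μH[n] (E ∩ ball x (d / 2)) < ⊤ := fun x hx =>
    (hE.2.2 x (htE hx) _ (half_pos hd) hd2).2.trans_lt ENNReal.ofReal_lt_top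
  refine ne_top_of_le_ne_top (measure_biUnion_lt_top ht hball).ne (measure_mono fun y hy => ?_)
  obtain ⟨x, hx, hyx⟩ := mem_iUnion₂.1 (hcov hy)
  exact mem_iUnion₂.2 ⟨x, hx, hy, hyx⟩

theorem exists_measure_inter_ball_le (hE : IsADR n C E) (hn : n ≠ 0) :
    ∃ C' : ℝ, ∀ x ∈ E, ∀ r : ℝ, μH[n] (E ∩ ball x r) ≤ ENNReal.ofReal (C' * r ^ n) := by
  set d := (Metric.ediam E).toReal
  set K := (μH[n] E).toReal / d ^ n
  have hC : 0 ≤ C := zero_le_one.trans hE.2.1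
  refine ⟨C + K, fun x hx r => ?_⟩
  rcases le_or_gt r 0 with hr | hr
  · simp [ball_eq_empty.2 hr]
  rcases lt_or_ge (ENNReal.ofReal r) (Metric.ediam E) with hrE | hrE
  · refine (hE.2.2 x hx r hr hrE).2.trans (ENNReal.ofReal_le_ofReal ?_)
    have : 0 ≤ K := by positivity
    gcongr
    linarith
  have hfin : Metric.ediam E ≠ ⊤ := ne_top_of_le_ne_top ENNReal.ofReal_ne_top hrE
  rcases (ENNReal.toReal_nonneg : 0 ≤ d).eq_or_lt with hd | hd
  · have hE0 : E.Subsingleton :=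
      Metric.ediam_eq_zero_iff.1 (((ENNReal.toReal_eq_zero_iff _).1 hd.symm).resolve_right hfin)
    have := Measure.nullSingletonClass_hausdorff (X := ES n) (d := n) (by positivity)
    simp [measure_mono_null inter_subset_left (hE0.measure_zero _)]
  have hdr : d ≤ r := ENNReal.toReal_le_of_le_ofReal hr.le hrE
  calc μH[n] (E ∩ ball x r) ≤ μH[n] E := measure_mono inter_subset_left
    _ = ENNReal.ofReal (K * d ^ n) := by
      rw [div_mul_cancel₀ _ (by positivity), ENNReal.ofReal_toReal (hE.measure_ne_top hfin)]
    _ ≤ ENNReal.ofReal ((C + K) * r ^ n) := by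
      have : 0 ≤ K := by positivity
      gcongr
      linarith

/-- The ADR lower bound is only available below `diam E`; a cube too large for it is all of `E`. -/
theorem exists_eq_or_le_measure_cube (hE : IsADR n C E) (D : DyadicSystem n E) :
    ∃ c : ℝ, 0 < c ∧ ∀ k : ℤ, ∀ Q ∈ D.cubes k,
      Q = E ∨ ENNReal.ofReal (c * ((2 : ℝ) ^ (-k)) ^ n) ≤ μH[n] Q := by
  have := D.a₀_pos
  refine ⟨C⁻¹ * (D.a₀ / 2) ^ n, by have := hE.2.1; positivity, fun k Q hQ => ?_⟩
  have hr : 0 < D.a₀ * 2 ^ (-k) / 2 := by positivity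
  rcases le_or_gt (Metric.ediam E) (ENNReal.ofReal (D.a₀ * 2 ^ (-k) / 2)) with h | h
  · refine .inl ((D.subset_of_mem hQ).antisymm fun y hy => D.contains_ball k Q hQ ⟨hy, ?_⟩)
    have := (Metric.edist_le_ediam_of_mem hy (D.center_mem_set hQ)).trans h
    rw [edist_dist, ENNReal.ofReal_le_ofReal_iff hr.le] at this
    rw [mem_ball]
    linarith
  refine .inr (le_trans (le_of_eq ?_) ((hE.2.2 _ (D.center_mem_set hQ) _ hr h).1.trans
    (measure_mono ((inter_subset_inter_right _ (ball_subset_ball (by linarith))).trans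
      (D.contains_ball k Q hQ)))))
  ring_nf

theorem exists_measure_cube_le (hE : IsADR n C E) (hn : n ≠ 0) (D : DyadicSystem n E) :
    ∃ C' : ℝ, ∀ k : ℤ, ∀ Q ∈ D.cubes k, μH[n] Q ≤ ENNReal.ofReal (C' * ((2 : ℝ) ^ (-k)) ^ n) := by
  obtain ⟨Cb, hCb⟩ := hE.exists_measure_inter_ball_le hn
  refine ⟨Cb * (D.Cstar + 1) ^ n, fun k Q hQ => ?_⟩
  have hsub : Q ⊆ E ∩ ball (D.center Q) ((D.Cstar + 1) * 2 ^ (-k)) := fun y hy =>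
    ⟨D.subset_of_mem hQ hy, mem_ball.2 ((D.dist_le_of_mem hQ hy (D.center_mem k Q hQ)).trans_lt
      (by have : (0 : ℝ) < 2 ^ (-k) := by positivity
          linarith))⟩
  calc μH[n] Q ≤ _ := measure_mono hsub
    _ ≤ _ := hCb _ (D.center_mem_set hQ) _
    _ = _ := by rw [mul_pow, mul_assoc]

theorem exists_measure_le_mul_measure (hE : IsADR n C E) (hn : n ≠ 0) (D : DyadicSystem n E)
    (m : ℕ) : ∃ K : ℝ≥0, ∀ (k : ℤ) (Q R : Set (ES n)), Q ∈ D.cubes k → R ∈ D.cubes (k + m) →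
      μH[n] Q ≤ K * μH[n] R := by
  obtain ⟨Cu, hCu⟩ := hE.exists_measure_cube_le hn D
  obtain ⟨c, hc, hcube⟩ := hE.exists_eq_or_le_measure_cube D
  refine ⟨max 1 (Cu * ((2 : ℝ) ^ m) ^ n / c).toNNReal, fun k Q R hQ hR => ?_⟩
  rcases hcube _ R hR with rfl | hRc
  · exact (measure_mono (D.subset_of_mem hQ)).trans
      (le_mul_of_one_le_left zero_le (by exact_mod_cast le_max_left _ _))
  have hscale : ((2 : ℝ) ^ (-k)) ^ n = ((2 : ℝ) ^ m) ^ n * ((2 : ℝ) ^ (-(k + m : ℤ))) ^ n := by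
    rw [← mul_pow, ← zpow_natCast (2 : ℝ) m, ← zpow_add₀ two_ne_zero]
    ring_nf
  calc μH[n] Q ≤ ENNReal.ofReal (Cu * ((2 : ℝ) ^ (-k)) ^ n) := hCu k Q hQ
    _ = ENNReal.ofReal (Cu * ((2 : ℝ) ^ m) ^ n / c) *
          ENNReal.ofReal (c * ((2 : ℝ) ^ (-(k + m : ℤ))) ^ n) := by
      rw [← ENNReal.ofReal_mul' (by positivity), hscale]
      field_simp
    _ ≤ _ := mul_le_mul' (ENNReal.coe_le_coe.2 (le_max_right _ _)) hRc

theorem exists_encard_cubes_near_le (hE : IsADR n C E) (hn : n ≠ 0) (D : DyadicSystem n E)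
    (L : ℝ) : ∃ M : ℝ≥0, ∀ (k : ℤ), ∀ z ∈ E,
      (Set.encard {Q ∈ D.cubes k | dist (D.center Q) z ≤ L * 2 ^ (-k)} : ℝ≥0∞) ≤ M := by
  obtain ⟨Cb, hCb⟩ := hE.exists_measure_inter_ball_le hn
  obtain ⟨c, hc, hcube⟩ := hE.exists_eq_or_le_measure_cube D
  refine ⟨max 1 (Cb * (L + D.Cstar + 1) ^ n / c).toNNReal, fun k z hz => ?_⟩
  set S := {Q ∈ D.cubes k | dist (D.center Q) z ≤ L * 2 ^ (-k)}
  set s : ℝ := 2 ^ (-k)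
  have hs : 0 < s := by positivity
  by_cases hES : ∃ Q ∈ S, Q = E
  · obtain ⟨Q, hQS, rfl⟩ := hES
    have hSE : S ⊆ {Q} := fun Q' hQ' => (D.eq_or_disjoint hQ'.1 hQS.1).resolve_right fun h =>
      h.ne_of_mem (D.center_mem k Q' hQ'.1) (D.center_mem_set hQ'.1) rfl
    calc (S.encard : ℝ≥0∞) ≤ ({Q} : Set (Set (ES n))).encard := by
          exact_mod_cast encard_le_encard hSE
      _ = 1 := by simp
      _ ≤ _ := by exact_mod_cast le_max_left _ _
  have hlow : ∀ Q ∈ S, ENNReal.ofReal (c * s ^ n) ≤ μH[n] Q := fun Q hQ =>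
    (hcube k Q hQ.1).resolve_left fun h => hES ⟨Q, hQ, h⟩
  have hsub : ∀ Q ∈ S, Q ⊆ E ∩ ball z ((L + D.Cstar + 1) * s) := fun Q hQ y hy =>
    ⟨D.subset_of_mem hQ.1 hy, mem_ball.2 (by
      linarith [dist_triangle y (D.center Q) z, D.dist_le_of_mem hQ.1 hy (D.center_mem k Q hQ.1),
        hQ.2])⟩
  have hdisj : Pairwise fun Q Q' : S => Disjoint (Q : Set (ES n)) Q' := fun Q Q' hne =>
    (D.eq_or_disjoint Q.2.1 Q'.2.1).resolve_left fun h => hne (Subtype.ext h)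
  have key : (S.encard : ℝ≥0∞) * ENNReal.ofReal (c * s ^ n) ≤
      ENNReal.ofReal (Cb * (L + D.Cstar + 1) ^ n / c) * ENNReal.ofReal (c * s ^ n) :=
    calc (S.encard : ℝ≥0∞) * ENNReal.ofReal (c * s ^ n)
        = ∑' _ : S, ENNReal.ofReal (c * s ^ n) := (ENNReal.tsum_set_const _ _).symm
      _ ≤ ∑' Q : S, μH[n] (Q : Set (ES n)) := ENNReal.tsum_le_tsum fun Q => hlow Q Q.2
      _ ≤ μH[n] (⋃ Q : S, (Q : Set (ES n))) :=
        tsum_meas_le_meas_iUnion_of_disjoint _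
          (fun Q => D.borel k Q Q.2.1) hdisj
      _ ≤ μH[n] (E ∩ ball z ((L + D.Cstar + 1) * s)) :=
        measure_mono (iUnion_subset fun Q => hsub Q Q.2)
      _ ≤ ENNReal.ofReal (Cb * ((L + D.Cstar + 1) * s) ^ n) := hCb z hz _
      _ = _ := by
        rw [← ENNReal.ofReal_mul' (by positivity)]
        congr 1
        rw [mul_pow]
        field_simp
  rw [ENNReal.mul_le_mul_iff_left (ENNReal.ofReal_pos.2 (by positivity)).ne'
    ENNReal.ofReal_ne_top] at key
  exact key.trans (ENNReal.coe_le_coe.2 (le_max_right _ _))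

theorem exists_generation_gap (hE : IsADR n C E) (hn : n ≠ 0) (D : DyadicSystem n E) :
    ∃ g : ℕ, ∀ ⦃k k' : ℤ⦄ ⦃Q Q' : Set (ES n)⦄, Q ∈ D.cubes k → Q' ∈ D.cubes k' → Q ⊆ Q' →
      Q' ≠ E → k' ≤ k + g := by
  obtain ⟨Cu, hCu⟩ := hE.exists_measure_cube_le hn D
  obtain ⟨c, hc, hcube⟩ := hE.exists_eq_or_le_measure_cube D
  obtain ⟨g, hg⟩ := pow_unbounded_of_one_lt (Cu / c) one_lt_two
  refine ⟨g, fun k k' Q Q' hQ hQ' hsub hQ'E => ?_⟩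
  have hQE : Q ≠ E := fun h => hQ'E ((D.subset_of_mem hQ').antisymm (h ▸ hsub))
  have hmeas := ((hcube k Q hQ).resolve_left hQE).trans
    ((measure_mono hsub).trans (hCu k' Q' hQ'))
  have hle : c * ((2 : ℝ) ^ (-k)) ^ n ≤ Cu * ((2 : ℝ) ^ (-k')) ^ n :=
    ((ENNReal.ofReal_le_ofReal_iff'.1 hmeas).resolve_right (not_le.2 (by positivity)))
  by_contra! hlt
  set t : ℝ := 2 ^ (k' - k)
  have ht : (2 : ℝ) ^ g ≤ t := by
    rw [← zpow_natCast]; exact zpow_le_zpow_right₀ one_le_two (by omega)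
  have hk : (2 : ℝ) ^ (-k) = t * 2 ^ (-k') := by
    rw [← zpow_add₀ two_ne_zero]; ring_nf
  have htn : t ≤ t ^ n := le_self_pow₀ ((one_le_pow₀ one_le_two).trans ht) hn
  rw [hk, mul_pow] at hle
  have : c * t ≤ Cu := by
    refine le_of_mul_le_mul_right ?_ (by positivity : (0 : ℝ) < ((2 : ℝ) ^ (-k')) ^ n)
    calc c * t * _ ≤ c * (t ^ n * _) := by rw [mul_assoc]; gcongr
      _ ≤ _ := hle
  rw [div_lt_iff₀ hc] at hg
  nlinarith

theorem exists_superset_near (hE : IsADR n C E) (hn : n ≠ 0) (D : DyadicSystem n E) (m : ℕ)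
    (L : ℝ) : ∃ g : ℕ, ∀ ⦃k₀ k : ℤ⦄ ⦃Q₀ Q R : Set (ES n)⦄, Q₀ ∈ D.cubes k₀ → Q ∈ D.cubes k →
      Q ⊆ Q₀ → R ∈ D.cubes (k + m) → dist (D.center Q) (D.center R) ≤ L * 2 ^ (-k) →
      ∃ A ∈ D.cubes (k₀ - g), dist (D.center A) (D.center Q₀) ≤
        (2 * D.Cstar + L) * 2 ^ (-(k₀ - g)) ∧ R ⊆ A := by
  obtain ⟨g, hg⟩ := hE.exists_generation_gap hn D
  refine ⟨g, fun k₀ k Q₀ Q R hQ₀ hQ hQQ₀ hR hQR => ?_⟩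
  have hL : 0 ≤ L := nonneg_of_mul_nonneg_left (dist_nonneg.trans hQR) (by positivity)
  by_cases hQ₀E : Q₀ = E
  · obtain ⟨A, hA, hQ₀A⟩ := D.exists_superset_of_le hQ₀ (by omega : k₀ - g ≤ k₀)
    have hAQ₀ : A = Q₀ := (D.subset_of_mem hA).antisymm (hQ₀E ▸ hQ₀A) |>.trans hQ₀E.symm
    refine ⟨A, hA, ?_, hAQ₀ ▸ hQ₀E ▸ D.subset_of_mem hR⟩
    rw [hAQ₀, dist_self]
    have := D.Cstar_pos
    positivity
  -- The generation gap keeps `k` from being much coarser than `k₀`.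
  have hk : k₀ - g ≤ k := by have := hg hQ hQ₀ hQQ₀ hQ₀E; omega
  obtain ⟨A, hA, hRA⟩ := D.exists_superset_of_le hR (by omega : k₀ - g ≤ k + m)
  refine ⟨A, hA, ?_, hRA⟩
  have h1 := D.dist_le_of_mem hA (D.center_mem _ A hA) (hRA (D.center_mem _ R hR))
  have h2 := D.dist_le_of_mem hQ₀ (hQQ₀ (D.center_mem _ Q hQ)) (D.center_mem _ Q₀ hQ₀)
  have h3 : (2 : ℝ) ^ (-k) ≤ 2 ^ (-(k₀ - g)) := zpow_le_zpow_right₀ one_le_two (by omega)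
  have h4 : (2 : ℝ) ^ (-k₀) ≤ 2 ^ (-(k₀ - g)) := zpow_le_zpow_right₀ one_le_two (by omega)
  have := D.Cstar_pos
  calc dist (D.center A) (D.center Q₀)
      ≤ dist (D.center A) (D.center R) + dist (D.center R) (D.center Q) +
        dist (D.center Q) (D.center Q₀) := dist_triangle4 _ _ _ _
    _ ≤ D.Cstar * 2 ^ (-(k₀ - g)) + L * 2 ^ (-k) + D.Cstar * 2 ^ (-k₀) := by
      rw [dist_comm (D.center R)]; gcongr
    _ ≤ (2 * D.Cstar + L) * 2 ^ (-(k₀ - g)) := by nlinarith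

theorem packedBy_of_exists_near (hE : IsADR n C E) (hn : n ≠ 0) (D : DyadicSystem n E)
    {B B' : ℤ → Set (ES n) → Prop} (m : ℕ) (L : ℝ) (hB' : ∃ C₁, PackedBy E D B' C₁)
    (hB : ∀ k Q, Q ∈ D.cubes k → B k Q →
      ∃ R ∈ D.cubes (k + m), dist (D.center Q) (D.center R) ≤ L * 2 ^ (-k) ∧ B' (k + m) R) :
    ∃ C', PackedBy E D B C' := by
  obtain ⟨C₁, hC₁⟩ := hB'
  obtain ⟨K, hK⟩ := hE.exists_measure_le_mul_measure hn D m
  obtain ⟨M, hM⟩ := hE.exists_encard_cubes_near_le hn D L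
  obtain ⟨g, hg⟩ := hE.exists_superset_near hn D m L
  obtain ⟨K', hK'⟩ := hE.exists_measure_le_mul_measure hn D g
  obtain ⟨M', hM'⟩ := hE.exists_encard_cubes_near_le hn D (2 * D.Cstar + L)
  choose! W hW using hB
  refine ⟨K * M * M' * C₁.toNNReal * K', fun k₀ Q₀ hQ₀ => ?_⟩
  set 𝒜 := {A ∈ D.cubes (k₀ - g) | dist (D.center A) (D.center Q₀) ≤
    (2 * D.Cstar + L) * 2 ^ (-(k₀ - g))}
  let w : D.subcubes B Q₀ → ℤ × Set (ES n) := fun p => (p.1.1 + m, W p.1.1 p.1.2)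
  have hw : ∀ p : D.subcubes B Q₀, w p ∈ ⋃ A ∈ 𝒜, D.subcubes B' A := fun p => by
    obtain ⟨hp, hpB, hpQ₀⟩ := p.2
    obtain ⟨hR, hQR, hRB'⟩ := hW _ _ hp hpB
    obtain ⟨A, hA, hAQ₀, hRA⟩ := hg hQ₀ hp hpQ₀ hR hQR
    exact mem_biUnion ⟨hA, hAQ₀⟩ ⟨hR, hRB', hRA⟩
  have hfib := D.encard_fiber_le hM (fun p => W p.1 p.2) fun p (hp : p ∈ D.subcubes B Q₀) =>
    ⟨hp.1, (hW _ _ hp.1 hp.2.1).1, (hW _ _ hp.1 hp.2.1).2.1⟩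
  calc ∑' p : D.subcubes B Q₀, μH[n] p.1.2
      ≤ ∑' p : D.subcubes B Q₀, K * μH[n] (w p).2 :=
        ENNReal.tsum_le_tsum fun p => hK _ _ _ p.2.1 (hW _ _ p.2.1 p.2.2.1).1
    _ = K * ∑' p : D.subcubes B Q₀, μH[n] (w p).2 := ENNReal.tsum_mul_left
    _ ≤ K * (M * ∑' q : range w, μH[n] q.1.2) := by
      gcongr
      exact ENNReal.tsum_comp_le_mul_tsum_range w (fun q => μH[n] q.2) hfib
    _ ≤ K * (M * ∑' q : ⋃ A ∈ 𝒜, D.subcubes B' A, μH[n] q.1.2) := by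
      gcongr
      exact ENNReal.tsum_mono_subtype (fun q : ℤ × Set (ES n) => μH[n] q.2) (range_subset_iff.2 hw)
    _ ≤ K * (M * ∑' A : 𝒜, ∑' q : D.subcubes B' A, μH[n] q.1.2) := by
      gcongr
      exact ENNReal.tsum_biUnion_le_tsum (fun q : ℤ × Set (ES n) => μH[n] q.2) _ _
    _ ≤ K * (M * ∑' _ : 𝒜, C₁.toNNReal * (K' * μH[n] Q₀)) := by
      gcongr with A
      exact (hC₁ _ A A.2.1).trans (mul_le_mul' le_rfl (hK' _ _ _ A.2.1 (by simpa using hQ₀)))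
    _ ≤ K * (M * (M' * (C₁.toNNReal * (K' * μH[n] Q₀)))) := by
      rw [ENNReal.tsum_set_const]
      gcongr
      exact hM' _ _ (D.center_mem_set hQ₀)
    _ = ENNReal.ofReal (K * M * M' * C₁.toNNReal * K' : ℝ≥0) * μH[n] Q₀ := by
      rw [ENNReal.ofReal_coe_nnreal]; push_cast; ring

end IsADR

theorem exists_pos_le_le_zpow_neg_two {a : ℝ} (ha : 0 < a) (X : ℝ) :
    ∃ t : ℝ, 0 < t ∧ t ≤ a ∧ X ≤ t ^ (-2 : ℤ) := by
  set t := min (min a 1) (|X| + 1)⁻¹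
  have ht : 0 < t := lt_min (lt_min ha one_pos) (by positivity)
  have ht1 : t ≤ 1 := (min_le_left _ _).trans (min_le_right _ _)
  refine ⟨t, ht, (min_le_left _ _).trans (min_le_left _ _), ?_⟩
  have hX : X ≤ t⁻¹ := (le_abs_self X).trans <| by
    have := (le_inv_comm₀ ht (by positivity)).1 (min_le_right _ _); linarith
  calc X ≤ t⁻¹ := hX
    _ ≤ t⁻¹ * t⁻¹ := le_mul_of_one_le_left (by positivity) (one_le_inv₀ ht |>.2 ht1)
    _ = t ^ (-2 : ℤ) := by rw [zpow_neg, zpow_two, mul_inv]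

theorem WHSA_implies_BAUP_general (n : ℕ) (hn : 2 ≤ n) (C_ADR : ℝ) (E : Set (ES n))
    (hE : IsADR n C_ADR E) (D : DyadicSystem n E) (K₀ ε₀ : ℝ)
    (hε₀ : 0 < ε₀)
    (hWHSA : ∀ ε : ℝ, 0 < ε → ε < ε₀ →
      ∃ C₁ : ℝ, PackedBy E D (fun k Q => ¬ LocalWHSA E D K₀ ε k Q) C₁) :
    (∀ ε : ℝ, 0 < ε → ε < ε₀ →
      ∃ C : ℝ, PackedBy E D (fun k Q => ¬ LocalBAUP E D (Real.sqrt ε) k Q) C) ∧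
    (∃ ε₁ : ℝ, 0 < ε₁ ∧ ∀ ε : ℝ, 0 < ε → ε < ε₁ →
      ∃ C : ℝ, PackedBy E D (fun k Q => ¬ LocalBAUP E D ε k Q) C) := by
  have hsqrt : ∀ ε : ℝ, 0 < ε → ε < ε₀ →
      ∃ C : ℝ, PackedBy E D (fun k Q => ¬ LocalBAUP E D (Real.sqrt ε) k Q) C := by
    intro ε hε hεε₀
    have hδ : 0 < Real.sqrt ε := Real.sqrt_pos.2 hε
    obtain ⟨m, hm⟩ := pow_unbounded_of_one_lt ((D.Cstar + K₀ ^ ((3 : ℝ) / 2)) / Real.sqrt ε)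
      one_lt_two
    obtain ⟨εc, hεc, hεcε, hεcm⟩ :=
      exists_pos_le_le_zpow_neg_two (lt_min hε hδ) (21 * D.Cstar * 2 ^ m)
    refine hE.packedBy_of_exists_near (by omega) D m (11 * D.Cstar)
      (hWHSA εc hεc ((hεcε.trans (min_le_left _ _)).trans_lt hεε₀)) fun k Q hQ hbad => ?_
    by_contra! h
    exact hbad (localBAUP_of_forall_localWHSA D hεc (hεcε.trans (min_le_right _ _))
      ((div_le_iff₀ hδ).1 hm.le |>.trans_eq (mul_comm _ _)) hεcm hQ h)
  refine ⟨hsqrt, min ε₀ 1, lt_min hε₀ one_pos, fun ε hε hε₁ => ?_⟩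
  have hε₀' : ε ^ 2 < ε₀ := by
    nlinarith [min_le_left ε₀ 1, min_le_right ε₀ 1]
  simpa [Real.sqrt_sq hε.le] using hsqrt (ε ^ 2) (by positivity) hε₀'

/-- If an `n`-dimensional ADR set `E ⊆ ℝ^{n+1}`, `n ≥ 2`, satisfies the
WHSA property with parameters `K₀`, `ε₀ < K₀⁻⁶`, then for every `0 < ε < ε₀` the cubes
failing the `√ε`-local BAUP condition satisfy a Carleson packing condition; in particular
`E` satisfies the BAUP condition. -/
theorem WHSA_implies_BAUP (n : ℕ) (hn : 2 ≤ n) (C_ADR : ℝ) (E : Set (ES n))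
    (hE : IsADR n C_ADR E) (D : DyadicSystem n E) (K₀ ε₀ : ℝ)
    (hK₀ : 1 ≤ K₀) (hε₀ : 0 < ε₀) (hε₀' : ε₀ < K₀ ^ (-6 : ℤ))
    (hWHSA : ∀ ε : ℝ, 0 < ε → ε < ε₀ →
      ∃ C₁ : ℝ, PackedBy E D (fun k Q => ¬ LocalWHSA E D K₀ ε k Q) C₁) :
    (∀ ε : ℝ, 0 < ε → ε < ε₀ →
      ∃ C : ℝ, PackedBy E D (fun k Q => ¬ LocalBAUP E D (Real.sqrt ε) k Q) C) ∧
    (∃ ε₁ : ℝ, 0 < ε₁ ∧ ∀ ε : ℝ, 0 < ε → ε < ε₁ →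
      ∃ C : ℝ, PackedBy E D (fun k Q => ¬ LocalBAUP E D ε k Q) C) :=
  WHSA_implies_BAUP_general n hn C_ADR E hE D K₀ ε₀ hε₀ hWHSA
end
end
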